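/- arXiv:2605.07086 — 2 statements merged into one kernel-verified Lean document; each statement's English description precedes it below -/
import Mathlib

section
/- Let w be a point with ρ²(w) < 1. Then the map I_T(w) = -(1/2)·log(1 - ρ²(w)) is differentiable at w, and its gradient at w equals ((1/(1 - ρ²(w))) · (b(w)/(D(w)·σ_T²))) • (c - (b(w)/D(w)) • Σ.mulVec w). In particular, the gradient of I_T at w is a scalar multiple of the residualized task-covariance direction c - (b(w)/D(w)) • Σ.mulVec w. -/
open InnerProductSpace

private lemma gradient_taskInfo_aux (B S P Q σ0sq σTsq : ℝ) (hD' : S + σ0sq ≠ 0)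
    (hT' : σTsq ≠ 0) (hR' : 1 - B ^ 2 * ((S + σ0sq) * σTsq)⁻¹ ≠ 0) :
    -(1 / 2) *
      ((1 - B ^ 2 * ((S + σ0sq) * σTsq)⁻¹)⁻¹ *
        -(B ^ 2 * (-(((S + σ0sq) * σTsq) ^ 2)⁻¹ * (σTsq * (Q + Q))) +
            ((S + σ0sq) * σTsq)⁻¹ * ((2:ℕ) * B ^ (2 - 1) * P))) =
    1 / (1 - B ^ 2 / ((S + σ0sq) * σTsq)) * (B / ((S + σ0sq) * σTsq)) * (P - B / (S + σ0sq) * Q) := by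
  set D : ℝ := S + σ0sq with hDdef
  set A : ℝ := D * σTsq with hAdef
  have hA : A ≠ 0 := mul_ne_zero hD' hT'
  have hK : A - B ^ 2 ≠ 0 := by
    intro h
    apply hR'
    rw [sub_eq_zero] at h
    rw [← h]
    field_simp
    norm_num
  clear_value A
  clear_value D
  have hrw : 1 - B ^ 2 * A⁻¹ = (A - B ^ 2) / A := by field_simp
  have hrw2 : 1 - B ^ 2 / A = (A - B ^ 2) / A := by field_simp
  rw [hrw, hrw2]
  field_simp
  rw [hAdef]
  ring

/-- At any `w` with `ρ²(w) < 1`, the task-information proxy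
`I_T(w) = -(1/2)·log(1 - ρ²(w))`, where `ρ²(w) = b(w)²/(D(w)·σ_T²)`,
`b(w) = ⟪w, c⟫`, `D(w) = ⟪w, Σ.mulVec w⟫ + σ0²`, is differentiable, and its
gradient equals
`((1/(1 - ρ²(w)))·(b(w)/(D(w)·σ_T²))) • (c - (b(w)/D(w)) • Σ.mulVec w)`,
a scalar multiple of the residualized task-covariance direction. -/
theorem gradient_taskInfo (n : ℕ) (Sig : Matrix (Fin n) (Fin n) ℝ)
    (hsymm : Sig.IsSymm) (hpsd : Sig.PosSemidef)
    (c : EuclideanSpace ℝ (Fin n)) (σ0sq σTsq : ℝ)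
    (hσ0 : 0 < σ0sq) (hσT : 0 < σTsq)
    (w : EuclideanSpace ℝ (Fin n))
    (hρ : (inner ℝ w c : ℝ) ^ 2 /
        ((((inner ℝ w ((WithLp.equiv 2 (Fin n → ℝ)).symm (Sig.mulVec w)) : ℝ) + σ0sq)) * σTsq)
        < 1) :
    DifferentiableAt ℝ
      (fun v : EuclideanSpace ℝ (Fin n) =>
        -(1 / 2 : ℝ) * Real.log
          (1 - (inner ℝ v c : ℝ) ^ 2 /
            ((((inner ℝ v ((WithLp.equiv 2 (Fin n → ℝ)).symm (Sig.mulVec v)) : ℝ) + σ0sq)) * σTsq))) w ∧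
    gradient
      (fun v : EuclideanSpace ℝ (Fin n) =>
        -(1 / 2 : ℝ) * Real.log
          (1 - (inner ℝ v c : ℝ) ^ 2 /
            ((((inner ℝ v ((WithLp.equiv 2 (Fin n → ℝ)).symm (Sig.mulVec v)) : ℝ) + σ0sq)) * σTsq))) w
      = ((1 / (1 - (inner ℝ w c : ℝ) ^ 2 /
              ((((inner ℝ w ((WithLp.equiv 2 (Fin n → ℝ)).symm (Sig.mulVec w)) : ℝ) + σ0sq)) * σTsq))) *
          ((inner ℝ w c : ℝ) /
            ((((inner ℝ w ((WithLp.equiv 2 (Fin n → ℝ)).symm (Sig.mulVec w)) : ℝ) + σ0sq)) * σTsq))) •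
          (c - ((inner ℝ w c : ℝ) /
              ((inner ℝ w ((WithLp.equiv 2 (Fin n → ℝ)).symm (Sig.mulVec w)) : ℝ) + σ0sq)) •
            (WithLp.equiv 2 (Fin n → ℝ)).symm (Sig.mulVec w)) := by
  set L : EuclideanSpace ℝ (Fin n) →L[ℝ] EuclideanSpace ℝ (Fin n) :=
    LinearMap.toContinuousLinearMap (Matrix.toEuclideanLin Sig) with hL
  -- symmetry
  have hLsym : ∀ u v : EuclideanSpace ℝ (Fin n), (inner ℝ u (L v) : ℝ) = inner ℝ (L u) v := by
    intro u v
    simp only [L, LinearMap.coe_toContinuousLinearMap', Matrix.toEuclideanLin_apply,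
      PiLp.inner_apply, RCLike.inner_apply, starRingEnd_apply, star_trivial]
    show dotProduct (Sig.mulVec (WithLp.equiv 2 (Fin n → ℝ) v)) (WithLp.equiv 2 (Fin n → ℝ) u)
      = dotProduct (WithLp.equiv 2 (Fin n → ℝ) v) (Sig.mulVec (WithLp.equiv 2 (Fin n → ℝ) u))
    rw [Matrix.dotProduct_mulVec, ← Matrix.mulVec_transpose, hsymm.eq]
  have hSpos : (0:ℝ) ≤ inner ℝ w (L w) := by
    have h := hpsd.dotProduct_mulVec_nonneg w
    simpa [L, Matrix.toEuclideanLin_apply, PiLp.inner_apply, dotProduct, mul_comm] using h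
  set B : ℝ := (inner ℝ w c : ℝ) with hB
  set S : ℝ := (inner ℝ w (L w) : ℝ) with hS
  have hD : (0:ℝ) < S + σ0sq := by positivity
  have hDT : (S + σ0sq) * σTsq ≠ 0 := by positivity
  have hρ' : B ^ 2 / ((S + σ0sq) * σTsq) < 1 := hρ
  have hR : (0:ℝ) < 1 - B ^ 2 / ((S + σ0sq) * σTsq) := by linarith
  -- derivative of b
  have hb : HasFDerivAt (fun v : EuclideanSpace ℝ (Fin n) => (inner ℝ v c : ℝ)) ((innerSL ℝ).flip c) w :=
    ((innerSL ℝ).flip c).hasFDerivAt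
  have hs : HasFDerivAt (fun v : EuclideanSpace ℝ (Fin n) => (inner ℝ v (L v) : ℝ))
      ((fderivInnerCLM ℝ (w, L w)).comp ((ContinuousLinearMap.id ℝ (EuclideanSpace ℝ (Fin n))).prod L)) w :=
    (hasFDerivAt_id w).inner ℝ (L.hasFDerivAt)
  have hb2 := (hasDerivAt_pow 2 ((inner ℝ w c : ℝ))).comp_hasFDerivAt w hb
  have hden := (hs.add_const σ0sq).mul_const σTsq
  have hinv := (hasDerivAt_inv hDT).comp_hasFDerivAt w hden
  have hq := hb2.mul hinv
  have H := ((hq.const_sub 1).log (by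
    show (1:ℝ) - (inner ℝ w c : ℝ)^2 * (((inner ℝ w (L w) : ℝ) + σ0sq) * σTsq)⁻¹ ≠ 0
    rw [← div_eq_mul_inv]; exact ne_of_gt hR)).const_mul (-(1/2 : ℝ))
  have HG := hasFDerivAt_iff_hasGradientAt.mp H
  refine ⟨HG.differentiableAt, Eq.trans HG.gradient ?_⟩
  apply_fun (toDual ℝ (EuclideanSpace ℝ (Fin n))) using (toDual ℝ (EuclideanSpace ℝ (Fin n))).injective
  rw [LinearIsometryEquiv.apply_symm_apply]
  ext v
  have he : (WithLp.equiv 2 (Fin n → ℝ)).symm (Sig.mulVec w) = L w := rfl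
  rw [he]
  simp only [ContinuousLinearMap.smul_apply, ContinuousLinearMap.add_apply,
    ContinuousLinearMap.neg_apply, ContinuousLinearMap.coe_comp', Function.comp_apply,
    ContinuousLinearMap.prod_apply, ContinuousLinearMap.coe_id', id_eq, fderivInnerCLM_apply,
    ContinuousLinearMap.flip_apply, innerSL_apply_apply, smul_eq_mul,
    InnerProductSpace.toDual_apply_apply, inner_smul_left, inner_sub_left, conj_trivial]
  rw [hLsym w v, real_inner_comm v c, real_inner_comm v (L w)]
  rw [← hB, ← hS]
  have hRT : (1:ℝ) - B ^ 2 * ((S + σ0sq) * σTsq)⁻¹ ≠ 0 := by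
    rw [← div_eq_mul_inv]; exact ne_of_gt hR
  exact gradient_taskInfo_aux B S (inner ℝ v c : ℝ) (inner ℝ v (L w) : ℝ) σ0sq σTsq
    (ne_of_gt hD) (ne_of_gt hσT) hRT
end

section
/- Let w be a point with ρ²(w) < 1 and b(w) ≠ 0. Then the inner product of the gradient of I_X at w and the gradient of I_T at w vanishes if and only if D(w)·⟪w, Σ.mulVec c⟫ = b(w)·⟪w, Σ.mulVec (Σ.mulVec w)⟫; that is, the two information-gradient directions are orthogonal exactly when D(w)·wᵀΣc = b(w)·wᵀΣ²w. -/
open InnerProductSpace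

variable {F : Type*} [NormedAddCommGroup F] [InnerProductSpace ℝ F] [CompleteSpace F]

lemma myGrad_comp {f : F → ℝ} {g x : F} (hf : HasGradientAt f g x) {φ : ℝ → ℝ} {k : ℝ}
    (hφ : HasDerivAt φ k (f x)) : HasGradientAt (fun v => φ (f v)) (k • g) x := by
  rw [hasGradientAt_iff_hasFDerivAt] at *
  convert hφ.comp_hasFDerivAt x hf using 1
  ext u
  simp [toDual_apply_apply, real_inner_smul_left]
  · rfl
  · ext u; simp [real_inner_smul_left]

lemma myGrad_mul {f₁ f₂ : F → ℝ} {g₁ g₂ : F} {x : F} (h₁ : HasGradientAt f₁ g₁ x)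
    (h₂ : HasGradientAt f₂ g₂ x) :
    HasGradientAt (fun v => f₁ v * f₂ v) (f₁ x • g₂ + f₂ x • g₁) x := by
  rw [hasGradientAt_iff_hasFDerivAt] at *
  convert h₁.mul h₂ using 1
  ext u
  simp [toDual_apply_apply, real_inner_smul_left, inner_add_left]
  · rfl
  · ext u; simp [real_inner_smul_left, inner_add_left]

lemma myGrad_inner_right (c x : F) : HasGradientAt (fun v => (inner ℝ v c : ℝ)) c x := by
  rw [hasGradientAt_iff_hasFDerivAt]
  have : (fun v : F => (inner ℝ v c : ℝ)) = fun v => (toDual ℝ F c) v := by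
    ext v; simp [toDual_apply_apply, real_inner_comm]
  rw [this]
  exact (toDual ℝ F c).hasFDerivAt

lemma myGrad_quadratic (T : F →L[ℝ] F) (hT : ∀ u v : F, (inner ℝ (T u) v : ℝ) = inner ℝ u (T v))
    (x : F) : HasGradientAt (fun v => (inner ℝ v (T v) : ℝ)) (T x + T x) x := by
  rw [hasGradientAt_iff_hasFDerivAt]
  convert HasFDerivAt.inner ℝ (hasFDerivAt_id x) (T.hasFDerivAt) using 1
  rotate_left 2
  ext u
  simp only [toDual_apply_apply, fderivInnerCLM_apply, inner_add_left,
    ContinuousLinearMap.comp_apply, ContinuousLinearMap.prod_apply,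
    ContinuousLinearMap.coe_id', id_eq]
  rw [real_inner_comm u (T x), ← hT x u, real_inner_comm (T x) u]
  · rfl
  · rfl

/-- At any `w` with `ρ²(w) < 1` and `b(w) ≠ 0`, the gradients of the
input-capture proxy `I_X(w) = (1/2)·log(1 + s(w)/σ₀²)` and of the
task-information proxy `I_T(w) = -(1/2)·log(1 - ρ²(w))` are orthogonal iff
`D(w)·⟪w, Σ.mulVec c⟫ = b(w)·⟪w, Σ.mulVec (Σ.mulVec w)⟫`, where
`s(w) = ⟪w, Σ.mulVec w⟫`, `b(w) = ⟪w, c⟫`, `D(w) = s(w) + σ₀²`, and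
`ρ²(w) = b(w)²/(D(w)·σ_T²)`. -/
theorem gradients_orthogonal_iff (n : ℕ) (Sig : Matrix (Fin n) (Fin n) ℝ)
    (hsymm : Sig.IsSymm) (hpsd : Sig.PosSemidef)
    (c : EuclideanSpace ℝ (Fin n)) (σ0sq σTsq : ℝ)
    (hσ0 : 0 < σ0sq) (hσT : 0 < σTsq)
    (w : EuclideanSpace ℝ (Fin n))
    (hρ : (inner ℝ w c : ℝ) ^ 2 /
        ((((inner ℝ w ((WithLp.equiv 2 (Fin n → ℝ)).symm (Sig.mulVec w)) : ℝ) + σ0sq)) * σTsq)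
        < 1)
    (hb : (inner ℝ w c : ℝ) ≠ 0) :
    (inner ℝ
        (gradient
          (fun v : EuclideanSpace ℝ (Fin n) =>
            (1 / 2 : ℝ) * Real.log
              (1 + (inner ℝ v ((WithLp.equiv 2 (Fin n → ℝ)).symm (Sig.mulVec v)) : ℝ) / σ0sq)) w)
        (gradient
          (fun v : EuclideanSpace ℝ (Fin n) =>
            -(1 / 2 : ℝ) * Real.log
              (1 - (inner ℝ v c : ℝ) ^ 2 /
                ((((inner ℝ v ((WithLp.equiv 2 (Fin n → ℝ)).symm (Sig.mulVec v)) : ℝ) + σ0sq)) * σTsq))) w)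
      : ℝ) = 0
    ↔ ((inner ℝ w ((WithLp.equiv 2 (Fin n → ℝ)).symm (Sig.mulVec w)) : ℝ) + σ0sq) *
        (inner ℝ w ((WithLp.equiv 2 (Fin n → ℝ)).symm (Sig.mulVec c)) : ℝ)
      = (inner ℝ w c : ℝ) *
        (inner ℝ w ((WithLp.equiv 2 (Fin n → ℝ)).symm (Sig.mulVec (Sig.mulVec w))) : ℝ) := by
  classical
  set T : EuclideanSpace ℝ (Fin n) →L[ℝ] EuclideanSpace ℝ (Fin n) :=
    LinearMap.toContinuousLinearMap (Matrix.toEuclideanLin Sig) with hTdef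
  have hT : ∀ u v : EuclideanSpace ℝ (Fin n), (inner ℝ (T u) v : ℝ) = inner ℝ u (T v) :=
    fun u v => (Matrix.isHermitian_iff_isSymmetric.mp hpsd.isHermitian) u v
  have hTe : ∀ v : EuclideanSpace ℝ (Fin n),
      (WithLp.equiv 2 (Fin n → ℝ)).symm (Sig.mulVec v) = T v := fun v => rfl
  have hT2 : (WithLp.equiv 2 (Fin n → ℝ)).symm (Sig.mulVec (Sig.mulVec w)) = T (T w) := rfl
  rw [hT2]
  simp only [hTe] at hρ ⊢
  -- positivity of s
  have hs0 : (0:ℝ) ≤ inner ℝ w (T w) := by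
    have h := hpsd.dotProduct_mulVec_nonneg (WithLp.equiv 2 (Fin n → ℝ) w)
    have heq : (inner ℝ w (T w) : ℝ)
        = dotProduct (star (WithLp.equiv 2 (Fin n → ℝ) w)) (Sig.mulVec w) :=
      by rw [EuclideanSpace.inner_eq_star_dotProduct, dotProduct_comm]; rfl
    rw [heq]; exact h
  set s : ℝ := inner ℝ w (T w) with hsdef
  set b : ℝ := inner ℝ w c with hbdef
  have hD : (0:ℝ) < s + σ0sq := by linarith
  have hDne : s + σ0sq ≠ 0 := ne_of_gt hD
  have hDD : (0:ℝ) < (s + σ0sq) * σTsq := mul_pos hD hσT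
  have hDDne : (s + σ0sq) * σTsq ≠ 0 := ne_of_gt hDD
  -- gradient of the quadratic form
  have hgs : HasGradientAt (fun v : EuclideanSpace ℝ (Fin n) => (inner ℝ v (T v) : ℝ))
      (T w + T w) w := myGrad_quadratic T hT w
  -- gradient of f1
  have h1arg : (1 : ℝ) + s / σ0sq ≠ 0 := by
    have : (0:ℝ) < 1 + s / σ0sq := by positivity
    exact ne_of_gt this
  have hφ1 : HasDerivAt (fun t : ℝ => (1 / 2 : ℝ) * Real.log (1 + t / σ0sq))
      ((1/2) * ((1 / σ0sq) / (1 + s / σ0sq))) s := by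
    have h1 : HasDerivAt (fun t : ℝ => 1 + t / σ0sq) (1 / σ0sq) s := by
      simpa using ((hasDerivAt_id s).div_const σ0sq).const_add (1:ℝ)
    exact (h1.log h1arg).const_mul (1/2 : ℝ)
  have hg1 : HasGradientAt
      (fun v : EuclideanSpace ℝ (Fin n) =>
        (1 / 2 : ℝ) * Real.log (1 + (inner ℝ v (T v) : ℝ) / σ0sq))
      (((1/2) * ((1 / σ0sq) / (1 + s / σ0sq))) • (T w + T w)) w := myGrad_comp hgs hφ1
  -- gradient of the ratio r
  have hgnum : HasGradientAt (fun v : EuclideanSpace ℝ (Fin n) => (inner ℝ v c : ℝ) ^ 2)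
      (((2:ℕ) * b ^ 1) • c) w := myGrad_comp (myGrad_inner_right c w) (hasDerivAt_pow 2 b)
  have hgden : HasGradientAt
      (fun v : EuclideanSpace ℝ (Fin n) => ((inner ℝ v (T v) : ℝ) + σ0sq) * σTsq)
      ((1 * σTsq) • (T w + T w)) w := by
    exact myGrad_comp hgs (((hasDerivAt_id s).add_const σ0sq).mul_const σTsq)
  have hginv : HasGradientAt
      (fun v : EuclideanSpace ℝ (Fin n) => (((inner ℝ v (T v) : ℝ) + σ0sq) * σTsq)⁻¹)
      ((-(((s + σ0sq) * σTsq) ^ 2)⁻¹) • ((1 * σTsq) • (T w + T w))) w :=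
    myGrad_comp hgden (hasDerivAt_inv hDDne)
  have hgr : HasGradientAt
      (fun v : EuclideanSpace ℝ (Fin n) =>
        (inner ℝ v c : ℝ) ^ 2 / (((inner ℝ v (T v) : ℝ) + σ0sq) * σTsq))
      (b ^ 2 • ((-(((s + σ0sq) * σTsq) ^ 2)⁻¹) • ((1 * σTsq) • (T w + T w)))
        + (((s + σ0sq) * σTsq)⁻¹) • (((2:ℕ) * b ^ 1) • c)) w := by
    have := myGrad_mul hgnum hginv
    simpa [div_eq_mul_inv] using this
  -- gradient of f2
  set rw' : ℝ := b ^ 2 / ((s + σ0sq) * σTsq) with hrwdef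
  have hrlt : rw' < 1 := hρ
  have h1r : (1:ℝ) - rw' ≠ 0 := by
    have : (0:ℝ) < 1 - rw' := by linarith
    exact ne_of_gt this
  have hφ2 : HasDerivAt (fun t : ℝ => -(1 / 2 : ℝ) * Real.log (1 - t))
      (-(1/2 : ℝ) * ((-1) / (1 - rw'))) rw' := by
    have h1 : HasDerivAt (fun t : ℝ => 1 - t) (-1 : ℝ) rw' := by
      simpa using (hasDerivAt_id rw').const_sub (1:ℝ)
    exact (h1.log h1r).const_mul (-(1/2 : ℝ))
  have hg2 : HasGradientAt
      (fun v : EuclideanSpace ℝ (Fin n) =>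
        -(1 / 2 : ℝ) * Real.log
          (1 - (inner ℝ v c : ℝ) ^ 2 / (((inner ℝ v (T v) : ℝ) + σ0sq) * σTsq)))
      ((-(1/2 : ℝ) * ((-1) / (1 - rw'))) •
        (b ^ 2 • ((-(((s + σ0sq) * σTsq) ^ 2)⁻¹) • ((1 * σTsq) • (T w + T w)))
          + (((s + σ0sq) * σTsq)⁻¹) • (((2:ℕ) * b ^ 1) • c))) w := myGrad_comp hgr hφ2
  rw [hg1.gradient, hg2.gradient]
  -- now pure computation
  have hA : (inner ℝ (T w) c : ℝ) = inner ℝ w (T c) := hT w c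
  have hB : (inner ℝ (T w) (T w) : ℝ) = inner ℝ w (T (T w)) := hT w (T w)
  set A : ℝ := inner ℝ w (T c) with hAdef
  set B : ℝ := inner ℝ w (T (T w)) with hBdef
  have hexp : (inner ℝ
      ((((1:ℝ)/2) * ((1 / σ0sq) / (1 + s / σ0sq))) • (T w + T w))
      ((-(1/2 : ℝ) * ((-1) / (1 - rw'))) •
        (b ^ 2 • ((-(((s + σ0sq) * σTsq) ^ 2)⁻¹) • ((1 * σTsq) • (T w + T w)))
          + (((s + σ0sq) * σTsq)⁻¹) • (((2:ℕ) * b ^ 1) • c))) : ℝ)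
      = (((1:ℝ)/2) * ((1 / σ0sq) / (1 + s / σ0sq))) * ((-(1/2 : ℝ)) * ((-1) / (1 - rw'))) *
          (4 * b / (((s + σ0sq))^2 * σTsq)) * ((s + σ0sq) * A - b * B) := by
    simp only [real_inner_smul_left, real_inner_smul_right, inner_add_left, inner_add_right,
      real_inner_smul_right]
    rw [hA, hB]
    field_simp
    ring
  rw [hexp]
  have hk : (((1:ℝ)/2) * ((1 / σ0sq) / (1 + s / σ0sq))) * ((-(1/2 : ℝ)) * ((-1) / (1 - rw'))) *
      (4 * b / (((s + σ0sq))^2 * σTsq)) ≠ 0 := by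
    have h1 : (0:ℝ) < 1 + s / σ0sq := by positivity
    have h2 : (0:ℝ) < 1 - rw' := by linarith
    have e1 : ((1:ℝ)/2) * ((1 / σ0sq) / (1 + s / σ0sq)) ≠ 0 := by positivity
    have e2 : (-(1/2 : ℝ)) * ((-1) / (1 - rw')) ≠ 0 := by
      have h3 : (-(1/2 : ℝ)) * ((-1) / (1 - rw')) = (1/2) * (1 / (1 - rw')) := by ring
      rw [h3]; positivity
    have e3 : 4 * b / (((s + σ0sq))^2 * σTsq) ≠ 0 := by
      apply div_ne_zero
      · exact mul_ne_zero (by norm_num) hb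
      · positivity
    exact mul_ne_zero (mul_ne_zero e1 e2) e3
  rw [mul_eq_zero]
  simp only [hk, false_or, sub_eq_zero]
end
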